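/- Let X be a finite-dimensional smooth real Banach space and T a bounded linear operator from X to X with operator norm 1 such that [T] = inf{‖Tz‖ : z ∈ S_X} > 0. Then there exists ε ∈ [0,1) such that for every x ∈ M_T and every y ∈ X, x ⊥_B y implies Ty ⊥_B^ε Tx (i.e., T is ε-CLAOR with respect to M_T). -/

import Mathlib

/-- Birkhoff–James orthogonality: `x ⊥_B y` iff `‖x + λ • y‖ ≥ ‖x‖` for every real `λ`. -/
def BJOrth {E : Type*} [NormedAddCommGroup E] [NormedSpace ℝ E] (x y : E) : Prop :=
  ∀ lam : ℝ, ‖x‖ ≤ ‖x + lam • y‖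

/-- `x` is a left-symmetric point: `x ⊥_B y` implies `y ⊥_B x` for all `y`. -/
def LeftSymmetricPt {E : Type*} [NormedAddCommGroup E] [NormedSpace ℝ E] (x : E) : Prop :=
  ∀ y : E, BJOrth x y → BJOrth y x

/-- `x` is a right-symmetric point: `y ⊥_B x` implies `x ⊥_B y` for all `y`. -/
def RightSymmetricPt {E : Type*} [NormedAddCommGroup E] [NormedSpace ℝ E] (x : E) : Prop :=
  ∀ y : E, BJOrth y x → BJOrth x y

/-- A nonzero `x` is a smooth point if there is exactly one norm-one continuous linear
functional `f` with `f x = ‖x‖`. -/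
def SmoothPoint {E : Type*} [NormedAddCommGroup E] [NormedSpace ℝ E] (x : E) : Prop :=
  ∃! f : E →L[ℝ] ℝ, ‖f‖ = 1 ∧ f x = ‖x‖

/-- A normed space is reflexive if the canonical embedding into the double dual is onto. -/
def ReflexiveSpace (E : Type*) [NormedAddCommGroup E] [NormedSpace ℝ E] : Prop :=
  Function.Surjective (NormedSpace.inclusionInDoubleDual ℝ E)

/-- `T` (a compact operator) is a right-symmetric point of the space of compact operators
(with the operator norm): `A ⊥_B T` implies `T ⊥_B A` for every compact operator `A`. -/
def RightSymmetricCompactOp {X Y : Type*} [NormedAddCommGroup X] [NormedSpace ℝ X]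
    [NormedAddCommGroup Y] [NormedSpace ℝ Y] (T : X →L[ℝ] Y) : Prop :=
  ∀ A : X →L[ℝ] Y, IsCompactOperator A → BJOrth A T → BJOrth T A

/-- `T` is left orthogonality preserving at `x`: `x ⊥_B y` implies `T x ⊥_B T y`. -/
def LeftOPAt {X Y : Type*} [NormedAddCommGroup X] [NormedSpace ℝ X]
    [NormedAddCommGroup Y] [NormedSpace ℝ Y] (T : X →L[ℝ] Y) (x : X) : Prop :=
  ∀ y : X, BJOrth x y → BJOrth (T x) (T y)

/-- Approximate Birkhoff–James orthogonality in the sense of Dragomir–Chmieliński: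
`x ⊥_D^ε y` iff `‖x + λ • y‖ ≥ √(1 - ε²) * ‖x‖` for every real `λ`. -/
def ApproxOrthD {E : Type*} [NormedAddCommGroup E] [NormedSpace ℝ E]
    (ε : ℝ) (x y : E) : Prop :=
  ∀ lam : ℝ, Real.sqrt (1 - ε ^ 2) * ‖x‖ ≤ ‖x + lam • y‖

/-- Approximate Birkhoff–James orthogonality in the sense of Chmieliński:
`x ⊥_B^ε y` iff `‖x + λ • y‖² ≥ ‖x‖² - 2ε‖x‖‖λ • y‖` for every real `λ`. -/
def ApproxOrthC {E : Type*} [NormedAddCommGroup E] [NormedSpace ℝ E]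
    (ε : ℝ) (x y : E) : Prop :=
  ∀ lam : ℝ, ‖x‖ ^ 2 - 2 * ε * ‖x‖ * ‖lam • y‖ ≤ ‖x + lam • y‖ ^ 2

/-!
Smoothness turns Birkhoff–James orthogonality into the vanishing of the unique supporting
functional. Hence if `‖T‖ = 1` and `T` attains its norm at `x`, the supporting functional of
`T x` pulled back by `T` supports `x`, and `x ⊥_B y` gives `T x ⊥_B T y`. It remains to see that
`u ⊥_B v` implies `v ⊥_B^ε u` for one `ε < 1` uniformly in `u, v`. A failure of this at level `ε`
produces unit vectors `z, w` with `w ⊥_B z` and a functional `g` of norm at most one with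
`g z ≥ 1/2` and `g w < -ε`. By compactness of the unit spheres and of the dual unit ball, `ε`
close to `1` would yield a limit with `g w = -1`, so that `-g` supports `w` and must vanish at `z`,
contradicting `g z ≥ 1/2`.
-/

section BirkhoffJames

variable {E F : Type*} [NormedAddCommGroup E] [NormedSpace ℝ E]
  [NormedAddCommGroup F] [NormedSpace ℝ F]

lemma BJOrth.smul {x y : E} (h : BJOrth x y) (a b : ℝ) : BJOrth (a • x) (b • y) := by
  intro lam
  rcases eq_or_ne a 0 with rfl | ha
  · simp
  calc ‖a • x‖ = |a| * ‖x‖ := by rw [norm_smul, Real.norm_eq_abs]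
    _ ≤ |a| * ‖x + (lam * b / a) • y‖ := by gcongr; exact h _
    _ = ‖a • x + lam • b • y‖ := by
        rw [← Real.norm_eq_abs, ← norm_smul, smul_add, smul_smul, smul_smul,
          mul_div_cancel₀ _ ha]

lemma isClosed_setOf_bjOrth : IsClosed {p : E × E | BJOrth p.1 p.2} := by
  simp only [BJOrth, Set.ofPred_forall]
  exact isClosed_iInter fun lam => isClosed_le (by fun_prop) (by fun_prop)

theorem bjOrth_iff_exists_dual {x y : E} :
    BJOrth x y ↔ ∃ f : StrongDual ℝ E, ‖f‖ ≤ 1 ∧ f x = ‖x‖ ∧ f y = 0 := by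
  constructor
  · intro h
    set S := ℝ ∙ y
    have hquot : ‖S.mkQ x‖ = ‖x‖ := by
      refine le_antisymm (Submodule.Quotient.norm_mk_le S x) (QuotientAddGroup.le_norm_iff.2 ?_)
      intro m hm
      obtain ⟨a, ha⟩ := Submodule.mem_span_singleton.1 ((Submodule.Quotient.eq S).1 hm)
      rw [← sub_add_cancel m x, ← ha, add_comm]
      exact h a
    obtain ⟨g, hg, hgx⟩ := exists_dual_vector'' ℝ (S.mkQ x)
    have hmkQL : ‖S.mkQL‖ ≤ 1 :=
      ContinuousLinearMap.opNorm_le_bound _ zero_le_one fun z => by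
        simpa using Submodule.Quotient.norm_mk_le S z
    have hy : S.mkQ y = 0 :=
      (Submodule.Quotient.mk_eq_zero S).2 (Submodule.mem_span_singleton_self y)
    refine ⟨g.comp S.mkQL, ?_, by rw [← hquot]; exact hgx, by simp [hy]⟩
    calc ‖g.comp S.mkQL‖ ≤ ‖g‖ * ‖S.mkQL‖ := g.opNorm_comp_le _
      _ ≤ 1 := mul_le_one₀ hg (norm_nonneg S.mkQL) hmkQL
  · rintro ⟨f, hf, hfx, hfy⟩ lam
    calc ‖x‖ = f (x + lam • y) := by simp [hfx, hfy]
      _ ≤ 1 * ‖x + lam • y‖ := (le_abs_self _).trans (f.le_of_opNorm_le hf _)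
      _ = ‖x + lam • y‖ := one_mul _

lemma norm_eq_one_of_apply_eq_norm {f : StrongDual ℝ E} {x : E} (hx : x ≠ 0) (hf : ‖f‖ ≤ 1)
    (hfx : f x = ‖x‖) : ‖f‖ = 1 := by
  refine le_antisymm hf (le_of_mul_le_mul_right ?_ (norm_pos_iff.2 hx))
  simpa [hfx] using f.le_opNorm x

lemma SmoothPoint.ne_zero {x : E} (hx : SmoothPoint x) : x ≠ 0 := by
  rintro rfl
  obtain ⟨f, ⟨hf, -⟩, huniq⟩ := hx
  -- both `f` and `-f` would support `0`
  have hneg : -f = f := huniq (-f) ⟨by rwa [norm_neg], by simp⟩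
  have hf0 : f = 0 := by
    ext v
    show f v = 0
    linarith [show -f v = f v from DFunLike.congr_fun hneg v]
  simp [hf0] at hf

lemma SmoothPoint.apply_eq_zero_of_bjOrth {x y : E} (hx : SmoothPoint x) (hxy : BJOrth x y)
    {f : StrongDual ℝ E} (hf : ‖f‖ ≤ 1) (hfx : f x = ‖x‖) : f y = 0 := by
  obtain ⟨h, hh, hhx, hhy⟩ := bjOrth_iff_exists_dual.1 hxy
  have hx0 := hx.ne_zero
  obtain ⟨f₀, -, huniq⟩ := hx
  have hf_eq : f = f₀ := huniq f ⟨norm_eq_one_of_apply_eq_norm hx0 hf hfx, hfx⟩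
  have hh_eq : h = f₀ := huniq h ⟨norm_eq_one_of_apply_eq_norm hx0 hh hhx, hhx⟩
  rw [hf_eq, ← hh_eq, hhy]

lemma SmoothPoint.bjOrth_map {x y : E} (hx : SmoothPoint x) (hxy : BJOrth x y) {T : E →L[ℝ] F}
    (hT : ‖T‖ ≤ 1) (hTx : ‖T x‖ = ‖x‖) : BJOrth (T x) (T y) := by
  obtain ⟨g, hg, hgTx⟩ := exists_dual_vector'' ℝ (T x)
  have hgT : ‖g.comp T‖ ≤ 1 :=
    (g.opNorm_comp_le T).trans (mul_le_one₀ hg (norm_nonneg T) hT)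
  have hgTy : g (T y) = 0 := hx.apply_eq_zero_of_bjOrth hxy hgT (by simpa [hTx] using hgTx)
  exact bjOrth_iff_exists_dual.2 ⟨g, hg, hgTx, hgTy⟩

lemma SmoothPoint.neg_one_lt_apply_of_bjOrth {w z : E} (hw : SmoothPoint w) (hw1 : ‖w‖ = 1)
    (hwz : BJOrth w z) {g : StrongDual ℝ E} (hg : ‖g‖ ≤ 1) (hgz : g z ≠ 0) : -1 < g w := by
  have hge : -1 ≤ g w := by
    have := (neg_abs_le (g w)).trans' (neg_le_neg (g.le_of_opNorm_le hg w))
    simpa [hw1] using this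
  refine hge.lt_of_ne fun hgw => hgz ?_
  have := hw.apply_eq_zero_of_bjOrth hwz (f := -g) (by rwa [norm_neg]) (by simp [← hgw, hw1])
  simpa using this

lemma approxOrthC_of_forall_sub_le {ε : ℝ} {x y : E}
    (h : ∀ lam : ℝ, ‖x‖ - ε * ‖lam • y‖ ≤ ‖x + lam • y‖) : ApproxOrthC ε x y := by
  intro lam
  have hlam := h lam
  rcases le_total 0 (‖x‖ - ε * ‖lam • y‖) with h0 | h0
  · nlinarith [pow_le_pow_left₀ h0 hlam 2, sq_nonneg (ε * ‖lam • y‖)]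
  · nlinarith [mul_nonneg (norm_nonneg x) (neg_nonneg.2 h0), sq_nonneg ‖x + lam • y‖]

lemma exists_dual_half_le_apply_lt_neg {z w : E} (hz : ‖z‖ = 1) (hw : ‖w‖ = 1) {ε t : ℝ}
    (hε : 0 ≤ ε) (ht : 0 < t) (hzw : ‖z + t • w‖ < 1 - ε * t) :
    ∃ g : StrongDual ℝ E, ‖g‖ ≤ 1 ∧ 1 / 2 ≤ g z ∧ g w < -ε := by
  obtain ⟨g, hg, hg_supp⟩ := exists_dual_vector'' ℝ (z - (1 / 2 : ℝ) • w)
  -- `(1/2 + t) z = t (z - w/2) + (z + t w)/2`, so `‖z - w/2‖ > 1 + ε/2`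
  have hconv : 1 / 2 + t ≤ t * ‖z - (1 / 2 : ℝ) • w‖ + 1 / 2 * ‖z + t • w‖ := by
    calc 1 / 2 + t = ‖(1 / 2 + t) • z‖ := by
          rw [norm_smul, hz, mul_one, Real.norm_of_nonneg (by positivity)]
      _ = ‖t • (z - (1 / 2 : ℝ) • w) + (1 / 2 : ℝ) • (z + t • w)‖ := by congr 1; module
      _ ≤ t * ‖z - (1 / 2 : ℝ) • w‖ + 1 / 2 * ‖z + t • w‖ := by
          refine (norm_add_le _ _).trans_eq ?_
          rw [norm_smul, norm_smul, Real.norm_of_nonneg ht.le, Real.norm_of_nonneg (by norm_num)]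
  have hgz : g z ≤ 1 := by simpa [hz] using (le_abs_self _).trans (g.le_of_opNorm_le hg z)
  have hgw : -1 ≤ g w := by
    simpa [hw] using (neg_abs_le _).trans' (neg_le_neg (g.le_of_opNorm_le hg w))
  have hg_eq : g z - 1 / 2 * g w = ‖z - (1 / 2 : ℝ) • w‖ := by simpa using hg_supp
  refine ⟨g, hg, ?_, ?_⟩ <;> nlinarith

variable [FiniteDimensional ℝ E]

lemma exists_neg_one_lt_forall_le_apply (hsmooth : ∀ x : E, x ≠ 0 → SmoothPoint x) :
    ∃ c, -1 < c ∧ ∀ (z w : E) (g : StrongDual ℝ E), ‖z‖ = 1 → ‖w‖ = 1 → BJOrth w z →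
      ‖g‖ ≤ 1 → 1 / 2 ≤ g z → c ≤ g w := by
  set K : Set (E × E × StrongDual ℝ E) :=
    {p | ‖p.1‖ = 1 ∧ ‖p.2.1‖ = 1 ∧ BJOrth p.2.1 p.1 ∧ ‖p.2.2‖ ≤ 1 ∧ 1 / 2 ≤ p.2.2 p.1}
  have hK : IsCompact K := by
    refine Metric.isCompact_of_isClosed_isBounded ?_ ?_
    · simp only [K, Set.ofPred_and]
      refine (isClosed_eq (by fun_prop) continuous_const).inter
        ((isClosed_eq (by fun_prop) continuous_const).inter
        ((isClosed_setOf_bjOrth.preimage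
          (f := fun p : E × E × StrongDual ℝ E => (p.2.1, p.1)) (by fun_prop)).inter
        ((isClosed_le (by fun_prop) continuous_const).inter
        (isClosed_le continuous_const (by fun_prop)))))
    · refine (Metric.isBounded_closedBall (x := 0) (r := 1)).subset fun p hp => ?_
      simp [Prod.norm_def, hp.1, hp.2.1, hp.2.2.2.1]
  rcases K.eq_empty_or_nonempty with hK_empty | hK_ne
  · refine ⟨0, by norm_num, fun z w g hz hw hwz hg hgz => ?_⟩
    have hmem : (z, w, g) ∈ K := ⟨hz, hw, hwz, hg, hgz⟩
    simp [hK_empty] at hmem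
  obtain ⟨⟨z, w, g⟩, ⟨hz, hw, hwz, hg, hgz⟩, hmin⟩ :=
    hK.exists_isMinOn hK_ne
      (by fun_prop : Continuous fun p : E × E × StrongDual ℝ E => p.2.2 p.2.1).continuousOn
  refine ⟨g w, ?_, fun z' w' g' hz' hw' hwz' hg' hgz' =>
    hmin (show (z', w', g') ∈ K from ⟨hz', hw', hwz', hg', hgz'⟩)⟩
  exact (hsmooth w (norm_ne_zero_iff.1 (by simp [hw]))).neg_one_lt_apply_of_bjOrth hw hwz hg
    (by linarith)

theorem exists_approxOrthC_of_bjOrth (hsmooth : ∀ x : E, x ≠ 0 → SmoothPoint x) :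
    ∃ ε : ℝ, 0 ≤ ε ∧ ε < 1 ∧ ∀ u v : E, BJOrth u v → ApproxOrthC ε v u := by
  obtain ⟨c, hc, hc_le⟩ := exists_neg_one_lt_forall_le_apply hsmooth
  set ε := max 0 (-c)
  have hε0 : 0 ≤ ε := le_max_left _ _
  have hε1 : ε < 1 := max_lt one_pos (by linarith)
  refine ⟨ε, hε0, hε1, fun u v huv => ?_⟩
  refine approxOrthC_of_forall_sub_le fun lam => ?_
  by_contra! hlt
  set a := ‖v‖
  set b := ‖lam • u‖
  have hεc : -c ≤ ε := le_max_right _ _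
  have h1 : a ≤ ‖v + lam • u‖ + b := by simpa using norm_sub_le (v + lam • u) (lam • u)
  have h2 : b ≤ ‖v + lam • u‖ + a := by simpa using norm_sub_le (v + lam • u) v
  have hb : 0 < b := by nlinarith
  have ha : 0 < a := by nlinarith
  have hz : ‖a⁻¹ • v‖ = 1 := norm_smul_inv_norm (norm_pos_iff.1 ha)
  have hw : ‖b⁻¹ • lam • u‖ = 1 := norm_smul_inv_norm (norm_pos_iff.1 hb)
  have hwz : BJOrth (b⁻¹ • lam • u) (a⁻¹ • v) := by
    simpa only [smul_smul] using huv.smul (b⁻¹ * lam) a⁻¹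
  have hsum : a⁻¹ • v + (b / a) • b⁻¹ • lam • u = a⁻¹ • (v + lam • u) := by
    have hcoef : b / a * b⁻¹ = a⁻¹ := by field_simp
    rw [smul_smul, hcoef, smul_add]
  have hslope : ‖a⁻¹ • v + (b / a) • b⁻¹ • lam • u‖ < 1 - ε * (b / a) := by
    rw [hsum, norm_smul, Real.norm_of_nonneg (inv_nonneg.2 ha.le)]
    rw [inv_mul_lt_iff₀ ha]
    calc ‖v + lam • u‖ < a - ε * b := hlt
      _ = a * (1 - ε * (b / a)) := by field_simp
  obtain ⟨g, hg, hgz, hgw⟩ :=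
    exists_dual_half_le_apply_lt_neg hz hw hε0 (div_pos hb ha) hslope
  linarith [hc_le _ _ g hz hw hwz hg hgz]

end BirkhoffJames

theorem CLAOR_wrt_norm_attainment_set_general {X : Type*}
    [NormedAddCommGroup X] [NormedSpace ℝ X] [FiniteDimensional ℝ X]
    (hsmooth : ∀ x : X, x ≠ 0 → SmoothPoint x)
    (T : X →L[ℝ] X) (hT : ‖T‖ = 1) :
    ∃ ε : ℝ, 0 ≤ ε ∧ ε < 1 ∧
      ∀ x : X, ‖x‖ = 1 → ‖T x‖ = ‖T‖ → ∀ y : X, BJOrth x y → ApproxOrthC ε (T y) (T x) := by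
  obtain ⟨ε, hε0, hε1, hε⟩ := exists_approxOrthC_of_bjOrth hsmooth
  refine ⟨ε, hε0, hε1, fun x hx hTx y hxy => hε _ _ ?_⟩
  have hx0 : x ≠ 0 := norm_ne_zero_iff.1 (by rw [hx]; exact one_ne_zero)
  exact (hsmooth x hx0).bjOrth_map hxy hT.le (by rw [hTx, hT, hx])

/-- Let `X` be a finite-dimensional smooth Banach space and `T : X → X` a
norm-one bounded operator with `[T] = inf {‖T z‖ : ‖z‖ = 1} > 0`. Then there is `ε ∈ [0,1)`
such that for every `x ∈ M_T` and every `y`, `x ⊥_B y` implies `T y ⊥_B^ε T x` (i.e., `T` is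
`ε`-CLAOR with respect to `M_T`). -/
theorem CLAOR_wrt_norm_attainment_set {X : Type*}
    [NormedAddCommGroup X] [NormedSpace ℝ X] [FiniteDimensional ℝ X]
    (hsmooth : ∀ x : X, x ≠ 0 → SmoothPoint x)
    (T : X →L[ℝ] X) (hT : ‖T‖ = 1)
    (hbelow : 0 < sInf {r : ℝ | ∃ z : X, ‖z‖ = 1 ∧ ‖T z‖ = r}) :
    ∃ ε : ℝ, 0 ≤ ε ∧ ε < 1 ∧
      ∀ x : X, ‖x‖ = 1 → ‖T x‖ = ‖T‖ → ∀ y : X, BJOrth x y → ApproxOrthC ε (T y) (T x) :=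
  CLAOR_wrt_norm_attainment_set_general hsmooth T hT
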